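/- Let D ∈ {-1, -2, -3, -7, -11, -19, -43, -67, -163}, K = ℚ(√D), O_K its ring of integers, p ∈ O_K a prime element, and A, B ∈ O_K. Let k ∈ O_K with p | k. If (k, s₁) and (k, s₂) are two points of O_K² on the curve E' : s = t³ + A t s² + B s³ with p | s₁ and p | s₂, then s₁ = s₂. -/
import Mathlib

/-- A vertical line `t = k` with `p | k` meets the curve `E' : s = t³ + Ats² + Bs³` in at most
one point `(t, s)` of `O_K²` with `p | s`, where `p` is a prime element of the ring of integers
`O_K` of `K = ℚ(√D)`. -/
theorem vertical_line_meets_Eprime_once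
    (D : ℤ) (hD : D ∈ ({-1, -2, -3, -7, -11, -19, -43, -67, -163} : Set ℤ))
    (K : Type*) [Field K] [CharZero K]
    (sqrtD : K) (hsqrtD : sqrtD ^ 2 = (D : K))
    (hK : ∀ z : K, ∃ a b : ℚ, z = (a : K) + (b : K) * sqrtD)
    (p : integralClosure ℤ K) (hp : Prime p)
    (A B : integralClosure ℤ K)
    (k s₁ s₂ : integralClosure ℤ K) (hk : p ∣ k)
    (h₁ : s₁ = k ^ 3 + A * k * s₁ ^ 2 + B * s₁ ^ 3)
    (h₂ : s₂ = k ^ 3 + A * k * s₂ ^ 2 + B * s₂ ^ 3)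
    (hs₁ : p ∣ s₁) (hs₂ : p ∣ s₂) :
    s₁ = s₂ := by
  set x : integralClosure ℤ K :=
    A * k * (s₁ + s₂) + B * (s₁ ^ 2 + s₁ * s₂ + s₂ ^ 2) with hx
  have key : (s₁ - s₂) * (1 - x) = 0 := by
    rw [hx]; linear_combination h₁ - h₂
  rcases mul_eq_zero.mp key with h | h
  · exact sub_eq_zero.mp h
  · exfalso
    have hpx : p ∣ x := by
      apply dvd_add
      · exact Dvd.dvd.mul_right (Dvd.dvd.mul_left hk A) _
      · refine Dvd.dvd.mul_left ?_ B
        exact dvd_add (dvd_add (dvd_pow hs₁ two_ne_zero) (Dvd.dvd.mul_right hs₁ s₂))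
          (dvd_pow hs₂ two_ne_zero)
    have hx1 : x = 1 := (sub_eq_zero.mp h).symm
    exact hp.not_unit (isUnit_of_dvd_one (hx1 ▸ hpx))
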